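/- arXiv:1903.04915 — 7 statements merged into one kernel-verified Lean document; each statement's English description precedes it below -/
import Mathlib

section
/- Let G be a Hausdorff topological abelian group and let (a_n)_{n∈ℕ} be a sequence in G converging to 0. Set A = {0} ∪ {a_n : n ∈ ℕ} ∪ {−a_n : n ∈ ℕ} and let A_k denote the k-fold sumset A + ⋯ + A. Then for every k ∈ ℕ, every infinite subset S of A_{k+1} has a cluster point lying in A_k; that is, there exists x ∈ A_k such that every neighborhood of x contains infinitely many elements of S. -/
open Filter Topology Pointwise

/-- If `a : ℕ → G` converges to `0` in a Hausdorff topological abelian group,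
`A = {0} ∪ {a n} ∪ {-a n}` and `Ak k` is the `k`-fold sumset of `A` (with `Ak 0 = {0}`),
then every infinite subset of `Ak (k+1)` has a cluster point in `Ak k`. -/
theorem infinite_subset_of_sumset_has_clusterPoint {G : Type*} [AddCommGroup G]
    [TopologicalSpace G] [IsTopologicalAddGroup G] [T2Space G]
    (a : ℕ → G) (ha : Tendsto a atTop (𝓝 0))
    (A : Set G) (hA : A = {0} ∪ Set.range a ∪ (-(Set.range a)))
    (Ak : ℕ → Set G) (hAk0 : Ak 0 = {0}) (hAksucc : ∀ k, Ak (k + 1) = Ak k + A) :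
    ∀ k : ℕ, ∀ S : Set G, S ⊆ Ak (k + 1) → S.Infinite →
      ∃ x ∈ Ak k, ∀ U ∈ 𝓝 x, (S ∩ U).Infinite := by
  -- `A` is compact
  have hna : Tendsto (fun n => -a n) atTop (𝓝 0) := by simpa using ha.neg
  have hAeq : A = insert 0 (Set.range a) ∪ insert 0 (Set.range fun n => -a n) := by
    rw [hA]; ext x
    simp only [Set.mem_union, Set.mem_insert_iff, Set.mem_range, Set.mem_neg,
      Set.mem_singleton_iff]
    constructor
    · rintro ((h | ⟨n, rfl⟩) | ⟨n, hn⟩)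
      · exact Or.inl (Or.inl h)
      · exact Or.inl (Or.inr ⟨n, rfl⟩)
      · exact Or.inr (Or.inr ⟨n, by rw [hn]; simp⟩)
    · rintro ((h | ⟨n, rfl⟩) | (h | ⟨n, rfl⟩))
      · exact Or.inl (Or.inl h)
      · exact Or.inl (Or.inr ⟨n, rfl⟩)
      · exact Or.inl (Or.inl h)
      · exact Or.inr ⟨n, by simp⟩
  have hAcomp : IsCompact A := by
    rw [hAeq]
    exact ha.isCompact_insert_range.union hna.isCompact_insert_range
  have hAkcomp : ∀ k, IsCompact (Ak k) := by
    intro k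
    induction k with
    | zero => rw [hAk0]; exact isCompact_singleton
    | succ k ih => rw [hAksucc]; exact ih.add hAcomp
  -- For every neighborhood `U` of `0`, `A \ U` is finite.
  have hAfin : ∀ U ∈ 𝓝 (0 : G), (A \ U).Finite := by
    intro U hU
    obtain ⟨N, hN⟩ := ((ha.eventually_mem hU).and (hna.eventually_mem hU)).exists_forall_of_atTop
    have hsub : A \ U ⊆ (a '' Set.Iio N) ∪ ((fun n => -a n) '' Set.Iio N) := by
      rintro x ⟨hxA, hxU⟩
      rw [hAeq] at hxA
      simp only [Set.mem_union, Set.mem_insert_iff, Set.mem_range] at hxA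
      rcases hxA with (rfl | ⟨n, rfl⟩) | (rfl | ⟨n, rfl⟩)
      · exact absurd (mem_of_mem_nhds hU) hxU
      · refine Or.inl ⟨n, ?_, rfl⟩
        by_contra hn
        exact hxU ((hN n (le_of_not_gt (by simpa using hn))).1)
      · exact absurd (mem_of_mem_nhds hU) hxU
      · refine Or.inr ⟨n, ?_, rfl⟩
        by_contra hn
        exact hxU ((hN n (le_of_not_gt (by simpa using hn))).2)
    exact (((Set.finite_Iio N).image a).union ((Set.finite_Iio N).image _)).subset hsub
  intro k
  induction k with
  | zero =>
    intro S hS hSinf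
    refine ⟨0, by rw [hAk0]; rfl, fun U hU => ?_⟩
    have hSA : S ⊆ A := by
      rw [hAksucc, hAk0] at hS
      simpa [Set.singleton_add] using hS
    have h1 : (S \ (A \ U)).Infinite := hSinf.diff (hAfin U hU)
    refine h1.mono ?_
    rintro x ⟨hxS, hx⟩
    refine ⟨hxS, ?_⟩
    by_contra hxU
    exact hx ⟨hSA hxS, hxU⟩
  | succ k ih =>
    intro S hS hSinf
    -- pick an injective enumeration of `S`
    set e := hSinf.natEmbedding
    set s : ℕ → G := fun n => (e n : G) with hs_def
    have hs_inj : Function.Injective s := fun m n h =>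
      e.injective (Subtype.ext h)
    have hsS : ∀ n, s n ∈ S := fun n => (e n).2
    have hsmem : ∀ n, ∃ y ∈ Ak (k + 1), ∃ z ∈ A, y + z = s n := by
      intro n
      have := hS (hsS n)
      rw [hAksucc] at this
      exact Set.mem_add.mp this
    choose f hf g hg hfg using hsmem
    -- ultrafilter extending atTop
    set 𝒰 : Ultrafilter ℕ := Ultrafilter.of atTop with h𝒰
    have hUle : (𝒰 : Filter ℕ) ≤ atTop := Ultrafilter.of_le atTop
    have hUinf : ∀ t ∈ 𝒰, t.Infinite := by
      intro t ht
      by_contra hfin'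
      rw [Set.not_infinite] at hfin'
      have hfin := hfin'
      have : tᶜ ∈ (𝒰 : Filter ℕ) := hUle (by
        rw [← Nat.cofinite_eq_atTop]; exact hfin.compl_mem_cofinite)
      exact (Ultrafilter.compl_notMem_iff.mpr ht) this
    -- limits along the ultrafilter
    obtain ⟨y, hy, hfy⟩ := (hAkcomp (k + 1)).ultrafilter_le_nhds (𝒰.map f)
      (le_principal_iff.mpr (Filter.mem_map.mpr (Filter.univ_mem' hf)))
    obtain ⟨b, hb, hgb⟩ := hAcomp.ultrafilter_le_nhds (𝒰.map g)
      (le_principal_iff.mpr (Filter.mem_map.mpr (Filter.univ_mem' hg)))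
    have hfy' : Tendsto f 𝒰 (𝓝 y) := hfy
    have hgb' : Tendsto g 𝒰 (𝓝 b) := hgb
    have hsten : Tendsto s 𝒰 (𝓝 (y + b)) := by
      have := hfy'.add hgb'
      simpa [hfg] using this
    by_cases hb0 : b = 0
    · -- cluster point is y itself
      refine ⟨y, hy, fun U hU => ?_⟩
      have hU' : U ∈ 𝓝 (y + b) := by rw [hb0, add_zero]; exact hU
      have hmem : {n | s n ∈ U} ∈ 𝒰 := hsten hU'
      have := (hUinf _ hmem).image (hs_inj.injOn)
      refine this.mono ?_
      rintro x ⟨n, hn, rfl⟩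
      exact ⟨hsS n, hn⟩
    · -- `g` is eventually equal to `b` along the ultrafilter
      obtain ⟨V, W, hVopen, hWopen, hbV, h0W, hVW⟩ := t2_separation hb0
      have hFfin : (A \ W).Finite := hAfin W (hWopen.mem_nhds h0W)
      have hgV : {n | g n ∈ V} ∈ 𝒰 := hgb' (hVopen.mem_nhds hbV)
      have hgF : {n | g n ∈ A \ W} ∈ 𝒰 := by
        refine Filter.mem_of_superset hgV fun n hn => ⟨hg n, fun hW => ?_⟩
        exact hVW.le_bot ⟨hn, hW⟩
      have hexc : ∃ c ∈ A \ W, {n | g n = c} ∈ 𝒰 := by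
        by_contra hcon
        push_neg at hcon
        have h1 : (⋂ c ∈ A \ W, {n | g n ≠ c}) ∈ (𝒰 : Filter ℕ) := by
          rw [Filter.biInter_mem hFfin]
          intro c hc
          have : {n | g n = c}ᶜ ∈ 𝒰 := Ultrafilter.compl_mem_iff_notMem.mpr (hcon c hc)
          exact this
        have h2 : (⋂ c ∈ A \ W, {n | g n ≠ c}) ∩ {n | g n ∈ A \ W} ∈ 𝒰 :=
          Filter.inter_mem h1 hgF
        have h3 : (⋂ c ∈ A \ W, {n | g n ≠ c}) ∩ {n | g n ∈ A \ W} = ∅ := by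
          ext n
          simp only [Set.mem_inter_iff, Set.mem_iInter, Set.mem_setOf_eq, Set.mem_empty_iff_false,
            iff_false, not_and]
          intro hall hmem
          exact hall _ hmem rfl
        rw [h3] at h2
        exact (hUinf _ h2) Set.finite_empty
      obtain ⟨c, hcF, hcmem⟩ := hexc
      have hcb : c = b := by
        have h1 : Tendsto (fun _ : ℕ => c) 𝒰 (𝓝 b) := by
          refine hgb'.congr' ?_
          exact Filter.eventuallyEq_of_mem hcmem fun n hn => hn
        exact tendsto_nhds_unique tendsto_const_nhds h1
      rw [hcb] at hcmem
      set E : Set ℕ := {n | g n = b} with hE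
      have hEinf : E.Infinite := hUinf _ hcmem
      set T : Set G := f '' E with hT
      have hTsub : T ⊆ Ak (k + 1) := by rintro x ⟨n, _, rfl⟩; exact hf n
      have hTinf : T.Infinite := by
        by_contra hTfin'
        rw [Set.not_infinite] at hTfin'
        have hTfin := hTfin'
        have himg : s '' E ⊆ (fun t => t + b) '' T := by
          rintro x ⟨n, hn, rfl⟩
          exact ⟨f n, ⟨n, hn, rfl⟩, by rw [← hfg n, hn]⟩
        exact (hEinf.image (hs_inj.injOn)) ((hTfin.image _).subset himg)
      obtain ⟨z, hz, hzcl⟩ := ih T hTsub hTinf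
      refine ⟨z + b, by rw [hAksucc]; exact Set.add_mem_add hz hb, fun U hU => ?_⟩
      have hU' : (fun w => w + b) ⁻¹' U ∈ 𝓝 z := by
        have : ContinuousAt (fun w : G => w + b) z := (continuous_add_right b).continuousAt
        exact this.preimage_mem_nhds (by simpa using hU)
      have hTU : (T ∩ (fun w => w + b) ⁻¹' U).Infinite := hzcl _ hU'
      have := hTU.image ((add_left_injective b).injOn)
      refine this.mono ?_
      rintro x ⟨t, ⟨⟨n, hn, rfl⟩, htU⟩, rfl⟩
      refine ⟨?_, htU⟩
      show f n + b ∈ S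
      have : f n + b = s n := by rw [← hfg n, hn]
      rw [this]
      exact hsS n
end

section
/- Let G be a Hausdorff topological abelian group and let (a_n)_{n∈ℕ} be an injective sequence of nonzero elements of G converging to 0. Set A = {0} ∪ {a_n : n ∈ ℕ} ∪ {−a_n : n ∈ ℕ} and let A_k denote the k-fold sumset. If k ∈ ℕ and g ∈ G with g ∉ A_k, then for all but finitely many n ∈ ℕ one has both g + a_n ∉ A_{k+1} and g − a_n ∉ A_{k+1}. -/
open Filter Topology Pointwise

/-- If `a : ℕ → G` is an injective sequence of nonzero elements converging to `0`
in a Hausdorff topological abelian group, `A = {0} ∪ {a n} ∪ {-a n}` and `Ak k` is the `k`-fold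
sumset of `A`, then for `g ∉ Ak k`, for all but finitely many `n` both `g + a n ∉ Ak (k+1)`
and `g - a n ∉ Ak (k+1)`. -/
theorem eventually_translates_not_in_sumset {G : Type*} [AddCommGroup G]
    [TopologicalSpace G] [IsTopologicalAddGroup G] [T2Space G]
    (a : ℕ → G) (ha : Tendsto a atTop (𝓝 0)) (hinj : Function.Injective a)
    (hne : ∀ n, a n ≠ 0)
    (A : Set G) (hA : A = {0} ∪ Set.range a ∪ (-(Set.range a)))
    (Ak : ℕ → Set G) (hAk0 : Ak 0 = {0}) (hAksucc : ∀ k, Ak (k + 1) = Ak k + A) :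
    ∀ (k : ℕ) (g : G), g ∉ Ak k →
      ∀ᶠ n in Filter.cofinite, g + a n ∉ Ak (k + 1) ∧ g - a n ∉ Ak (k + 1) := by
  -- Basic membership facts about `A`
  have h0A : (0 : G) ∈ A := by rw [hA]; exact Or.inl (Or.inl rfl)
  have haA : ∀ m, a m ∈ A := fun m => by
    rw [hA]; exact Or.inl (Or.inr ⟨m, rfl⟩)
  have hnegaA : ∀ m, -a m ∈ A := fun m => by
    rw [hA]; right; rw [Set.mem_neg]; exact ⟨m, by simp⟩
  have hmemA : ∀ x ∈ A, x = 0 ∨ (∃ m, x = a m) ∨ (∃ m, x = -a m) := by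
    intro x hx
    rw [hA] at hx
    rcases hx with (h | ⟨m, rfl⟩) | h
    · exact Or.inl h
    · exact Or.inr (Or.inl ⟨m, rfl⟩)
    · rw [Set.mem_neg] at h
      obtain ⟨m, hm⟩ := h
      exact Or.inr (Or.inr ⟨m, by rw [hm, neg_neg]⟩)
  have hnegA : ∀ x ∈ A, -x ∈ A := by
    intro x hx
    rcases hmemA x hx with rfl | ⟨m, rfl⟩ | ⟨m, rfl⟩
    · simpa using h0A
    · exact hnegaA m
    · simpa using haA m
  -- `A` is compact
  have hAcomp : IsCompact A := by
    have h1 : IsCompact (insert (0 : G) (Set.range a)) := ha.isCompact_insert_range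
    have h2 : IsCompact (-(insert (0 : G) (Set.range a))) := h1.neg
    have : A = insert (0 : G) (Set.range a) ∪ -(insert (0 : G) (Set.range a)) := by
      rw [hA]
      ext x
      simp [Set.mem_insert_iff, Set.mem_neg, or_comm, or_assoc, or_left_comm, neg_eq_iff_eq_neg,
        eq_comm (a := x)]
    rw [this]
    exact h1.union h2
  -- each `Ak k` is compact, hence closed
  have hAkcomp : ∀ k, IsCompact (Ak k) := by
    intro k
    induction k with
    | zero => rw [hAk0]; exact isCompact_singleton
    | succ k ih => rw [hAksucc]; exact ih.add hAcomp
  have hAkcl : ∀ k, IsClosed (Ak k) := fun k => (hAkcomp k).isClosed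
  -- each `Ak k` is symmetric
  have hAkneg : ∀ k, ∀ x ∈ Ak k, -x ∈ Ak k := by
    intro k
    induction k with
    | zero => intro x hx; rw [hAk0] at *; simp_all
    | succ k ih =>
      intro x hx
      rw [hAksucc] at *
      rcases hx with ⟨y, hy, s, hs, rfl⟩
      exact ⟨-y, ih y hy, -s, hnegA s hs, (neg_add y s).symm⟩
  -- the shifted family
  set B : ℕ → Set G := fun k => match k with
    | 0 => (∅ : Set G)
    | k + 1 => Ak k with hB
  have hBadd : ∀ k, ∀ x ∈ B k, ∀ s ∈ A, x + s ∈ Ak k := by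
    intro k x hx s hs
    match k with
    | 0 => exact absurd hx (Set.notMem_empty x)
    | k + 1 =>
      rw [hAksucc]
      exact ⟨x, hx, s, hs, rfl⟩
  -- the key finiteness statement
  have key : ∀ k, ∀ g : G, g ∉ B k → {n | g + a n ∈ Ak k}.Finite := by
    intro k
    induction k with
    | zero =>
      intro g _
      rw [hAk0]
      apply Set.Subsingleton.finite
      intro x hx y hy
      simp only [Set.mem_setOf_eq, Set.mem_singleton_iff] at hx hy
      apply hinj
      have : g + a x = g + a y := by rw [hx, hy]
      exact add_left_cancel this
    | succ k ih =>
      intro g hg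
      have hgAk : g ∉ Ak k := hg
      rw [← Set.not_infinite]
      intro hS
      set S : Set ℕ := {n | g + a n ∈ Ak (k + 1)} with hSdef
      -- choose decompositions
      have hdecomp : ∀ n, ∃ y s, n ∈ S → y ∈ Ak k ∧ s ∈ A ∧ g + a n = y + s := by
        intro n
        by_cases hn : n ∈ S
        · have : g + a n ∈ Ak k + A := by rw [← hAksucc]; exact hn
          rcases this with ⟨y, hy, s, hs, hsum⟩
          exact ⟨y, s, fun _ => ⟨hy, hs, hsum.symm⟩⟩
        · exact ⟨0, 0, fun h => absurd h hn⟩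
      choose y sv hys using hdecomp
      -- the main case analysis helper
      have case_b : ∀ b : ℕ → G, Tendsto b atTop (𝓝 0) → (∀ j, b j ∈ A) →
          ∀ (T : Set ℕ) (m : ℕ → ℕ), T.Infinite →
          (∀ n ∈ T, g + a n - b (m n) ∈ Ak k) → False := by
        intro b hb hbA T m hT hmem
        by_cases hfib : ∃ v, {n ∈ T | m n = v}.Infinite
        · obtain ⟨v, hv⟩ := hfib
          have hh : g - b v ∉ B k := by
            intro hc
            have := hBadd k _ hc (b v) (hbA v)
            rw [sub_add_cancel] at this
            exact hgAk this
          have hfin := ih (g - b v) hh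
          apply hv
          apply hfin.subset
          intro n hn
          rcases hn with ⟨hnT, hnv⟩
          have h3 := hmem n hnT
          rw [hnv] at h3
          show g - b v + a n ∈ Ak k
          have e : g - b v + a n = g + a n - b v := by abel
          rw [e]; exact h3
        · push_neg at hfib
          have hF : (cofinite ⊓ 𝓟 T).NeBot := hT.cofinite_inf_principal_neBot
          set F := cofinite ⊓ 𝓟 T with hFdef
          have hmemF : ∀ W : Set ℕ, (T \ W).Finite → W ∈ F := by
            intro W hW
            refine mem_inf_of_inter hW.compl_mem_cofinite (mem_principal_self T) ?_
            intro x hx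
            by_contra hxW
            exact hx.1 ⟨hx.2, hxW⟩
          have hbm : Tendsto (fun n => b (m n)) F (𝓝 0) := by
            intro U hU
            apply hmemF
            have hJ : {j | b j ∉ U}.Finite := by
              rw [← Nat.cofinite_eq_atTop] at hb
              exact hb hU
            have : T \ (fun n => b (m n)) ⁻¹' U ⊆ ⋃ j ∈ {j | b j ∉ U}, {n ∈ T | m n = j} := by
              intro n hn
              exact Set.mem_biUnion (show m n ∈ {j | b j ∉ U} from hn.2) ⟨hn.1, rfl⟩
            exact (hJ.biUnion fun j _ => hfib j).subset this
          have haF : Tendsto a F (𝓝 0) := by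
            apply ha.mono_left
            rw [← Nat.cofinite_eq_atTop]
            exact inf_le_left
          have hlim : Tendsto (fun n => g + a n - b (m n)) F (𝓝 g) := by
            have h := ((tendsto_const_nhds (x := g) (f := F)).add haF).sub hbm
            simpa using h
          have : g ∈ Ak k := by
            apply (hAkcl k).mem_of_tendsto hlim
            rw [hFdef, eventually_inf_principal]
            exact Eventually.of_forall fun n hn => hmem n hn
          exact hgAk this
      -- split `S` into three pieces
      set S0 : Set ℕ := {n ∈ S | sv n = 0} with hS0def
      set SB : Set ℕ := {n ∈ S | ∃ v, sv n = a v} with hSBdef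
      set SC : Set ℕ := {n ∈ S | ∃ v, sv n = -a v} with hSCdef
      have hsplit : S ⊆ S0 ∪ SB ∪ SC := by
        intro n hn
        rcases hmemA (sv n) (hys n hn).2.1 with h | h | h
        · exact Or.inl (Or.inl ⟨hn, h⟩)
        · exact Or.inl (Or.inr ⟨hn, h⟩)
        · exact Or.inr ⟨hn, h⟩
      have hone : S0.Infinite ∨ SB.Infinite ∨ SC.Infinite := by
        by_contra hc
        push_neg at hc
        exact hS (((hc.1.union hc.2.1).union hc.2.2).subset hsplit)
      rcases hone with h | h | h
      · refine case_b (fun _ => 0) tendsto_const_nhds (fun _ => h0A) S0 (fun _ => 0) h ?_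
        intro n hn
        have h1 := (hys n hn.1).2.2
        have h2 := (hys n hn.1).1
        rw [hn.2, add_zero] at h1
        rw [sub_zero, h1]
        exact h2
      · choose mB hmB using fun n (hn : n ∈ SB) => hn.2
        have hmB' : ∀ n, ∃ v, n ∈ SB → sv n = a v := by
          intro n
          by_cases hn : n ∈ SB
          · exact ⟨mB n hn, fun _ => hmB n hn⟩
          · exact ⟨0, fun h => absurd h hn⟩
        choose m hm using hmB'
        refine case_b a ha haA SB m h ?_
        intro n hn
        have h1 := (hys n hn.1).2.2
        rw [hm n hn] at h1
        rw [h1]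
        simpa using (hys n hn.1).1
      · have hmC' : ∀ n, ∃ v, n ∈ SC → sv n = -a v := by
          intro n
          by_cases hn : n ∈ SC
          · obtain ⟨v, hv⟩ := hn.2
            exact ⟨v, fun _ => hv⟩
          · exact ⟨0, fun h => absurd h hn⟩
        choose m hm using hmC'
        have hbten : Tendsto (fun j => -a j) atTop (𝓝 (0 : G)) := by
          simpa using ha.neg
        refine case_b (fun j => -a j) hbten hnegaA SC m h ?_
        intro n hn
        have h1 := (hys n hn.1).2.2
        rw [hm n hn] at h1
        rw [h1]
        simpa using (hys n hn.1).1
  -- conclude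
  intro k g hg
  rw [eventually_cofinite]
  have h1 : {n | g + a n ∈ Ak (k + 1)}.Finite := key (k + 1) g hg
  have h2 : {n | -g + a n ∈ Ak (k + 1)}.Finite := by
    apply key (k + 1) (-g)
    intro hc
    exact hg (by simpa using hAkneg k _ hc)
  apply (h1.union h2).subset
  intro n hn
  simp only [Set.mem_setOf_eq, not_and_or, not_not] at hn
  rcases hn with h | h
  · exact Or.inl h
  · right
    have := hAkneg (k + 1) _ h
    simpa [neg_sub, sub_eq_add_neg, add_comm] using this
end

section
/- Let G be a Hausdorff topological abelian group and let (a_n)_{n∈ℕ} be an injective sequence of nonzero elements of G converging to 0. Set A = {0} ∪ {a_n : n ∈ ℕ} ∪ {−a_n : n ∈ ℕ} and let A_k denote the k-fold sumset. Then there exists a strictly increasing function m : ℕ → ℕ such that the subsequence b_n = a_{m(n)} satisfies: (i) the map F ↦ ∑_{i∈F} b_i from finite subsets of ℕ to G is injective; (ii) for all finite F, H ⊆ ℕ, ∑_{i∈F} b_i − ∑_{i∈H} b_i ∈ A_{|F △ H|}; and (iii) for all finite F, H ⊆ ℕ and all n ∈ ℕ, if ∑_{i∈F} b_i − ∑_{i∈H}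 b_i ∈ A_n then |F △ H| ≤ n. (In particular F ↦ ∑_{i∈F} b_i is an isometric copy of the Hamming space inside G with the word metric determined by A.) -/
open Filter Topology Pointwise

section Aux

section Aux
variable {G : Type*} [AddCommGroup G] [TopologicalSpace G] [IsTopologicalAddGroup G] [T2Space G]

/-- A finite set `I` of indices is good if no `±1`-signed sum of `a i`, `i ∈ S ⊆ I`,
lies in `Ak n` for `n < |S|`. -/
def GoodSet (a : ℕ → G) (Ak : ℕ → Set G) (I : Finset ℕ) : Prop :=
  ∀ S : Finset ℕ, S ⊆ I → ∀ f : ℕ → G, (∀ i ∈ S, f i = a i ∨ f i = -a i) →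
    ∀ n, n < S.card → ∑ i ∈ S, f i ∉ Ak n

theorem compactA (a : ℕ → G) (ha : Tendsto a atTop (𝓝 0)) {A : Set G}
    (hA : A = {0} ∪ Set.range a ∪ (-(Set.range a))) : IsCompact A := by
  have h1 : IsCompact (insert (0:G) (Set.range a)) := ha.isCompact_insert_range
  have h2 : IsCompact (Neg.neg '' (insert (0:G) (Set.range a))) :=
    h1.image continuous_neg
  have : A = insert (0:G) (Set.range a) ∪ (Neg.neg '' (insert (0:G) (Set.range a))) := by
    rw [hA]
    ext x
    simp only [Set.mem_union, Set.mem_insert_iff, Set.mem_range, Set.mem_image,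
      Set.mem_singleton_iff, Set.mem_neg]
    constructor
    · rintro ((h | ⟨n, rfl⟩) | h)
      · exact Or.inl (Or.inl h)
      · exact Or.inl (Or.inr ⟨n, rfl⟩)
      · rcases h with ⟨n, hn⟩
        exact Or.inr ⟨a n, Or.inr ⟨n, rfl⟩, by rw [hn, neg_neg]⟩
    · rintro ((h | h) | ⟨y, (rfl | ⟨n, rfl⟩), rfl⟩)
      · exact Or.inl (Or.inl h)
      · exact Or.inl (Or.inr h)
      · exact Or.inl (Or.inl neg_zero)
      · exact Or.inr ⟨n, by rw [neg_neg]⟩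
  rw [this]
  exact h1.union h2

theorem compactAk {A : Set G} (hAc : IsCompact A) (Ak : ℕ → Set G)
    (hAk0 : Ak 0 = {0}) (hAksucc : ∀ k, Ak (k + 1) = Ak k + A) :
    ∀ n, IsCompact (Ak n) := by
  intro n
  induction n with
  | zero => rw [hAk0]; exact isCompact_singleton
  | succ k ih => rw [hAksucc]; exact ih.add hAc

/-- Every nonzero point of `A` is isolated in `A`. -/
theorem isolatedA (a : ℕ → G) (ha : Tendsto a atTop (𝓝 0)) {A : Set G}
    (hA : A = {0} ∪ Set.range a ∪ (-(Set.range a))) :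
    ∀ x ∈ A, x ≠ 0 → ∃ U ∈ 𝓝 x, ∀ y ∈ A, y ∈ U → y = x := by
  intro x hxA hx0
  obtain ⟨U, V, hU, hV, hxU, h0V, hUV⟩ := t2_separation hx0
  have haV : ∀ᶠ k in atTop, a k ∈ V := ha.eventually (hV.mem_nhds h0V)
  have hnaV : ∀ᶠ k in atTop, -a k ∈ V := by
    have : Tendsto (fun k => -a k) atTop (𝓝 (-(0:G))) := ha.neg
    rw [neg_zero] at this
    exact this.eventually (hV.mem_nhds h0V)
  obtain ⟨K, hK⟩ := (haV.and hnaV).exists_forall_of_atTop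
  set Φ : Set G := (a '' {k | k < K}) ∪ ((fun k => -a k) '' {k | k < K}) with hΦdef
  have hΦfin : Φ.Finite :=
    ((Set.finite_lt_nat K).image a).union ((Set.finite_lt_nat K).image _)
  have hsub : A ⊆ V ∪ Φ ∪ {0} := by
    intro y hy
    rw [hA] at hy
    rcases hy with ((h | ⟨k, rfl⟩) | h)
    · exact Or.inr h
    · rcases lt_or_ge k K with hk | hk
      · exact Or.inl (Or.inr (Or.inl ⟨k, hk, rfl⟩))
      · exact Or.inl (Or.inl (hK k hk).1)
    · rw [Set.mem_neg] at h
      rcases h with ⟨k, hk⟩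
      have hyk : y = -a k := by rw [hk, neg_neg]
      subst hyk
      rcases lt_or_ge k K with hk' | hk'
      · exact Or.inl (Or.inr (Or.inr ⟨k, hk', rfl⟩))
      · exact Or.inl (Or.inl (hK k hk').2)
  refine ⟨U \ (Φ \ {x}), ?_, ?_⟩
  · exact (hU.sdiff ((hΦfin.subset Set.diff_subset).isClosed)).mem_nhds
      ⟨hxU, fun h => h.2 rfl⟩
  · rintro y hyA ⟨hyU, hyΦ⟩
    rcases hsub hyA with ((hyV | hyΦ') | hy0)
    · exact absurd hyV (Set.disjoint_left.mp hUV hyU)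
    · by_contra hne
      exact hyΦ ⟨hyΦ', hne⟩
    · rw [Set.mem_singleton_iff] at hy0
      subst hy0
      exact absurd h0V (Set.disjoint_left.mp hUV hyU)

theorem sum_mem_Ak {A : Set G} (Ak : ℕ → Set G)
    (hAk0 : Ak 0 = {0}) (hAksucc : ∀ k, Ak (k + 1) = Ak k + A) :
    ∀ (S : Finset ℕ) (f : ℕ → G), (∀ i ∈ S, f i ∈ A) → ∑ i ∈ S, f i ∈ Ak S.card := by
  intro S
  induction S using Finset.induction_on with
  | empty => intro f _; simp [hAk0]
  | insert _ _ hnot ih =>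
    intro f hf
    rename_i b S
    rw [Finset.sum_insert hnot, Finset.card_insert_of_notMem hnot, hAksucc, add_comm (f _)]
    exact Set.add_mem_add (ih f fun i hi => hf i (Finset.mem_insert_of_mem hi))
      (hf b (Finset.mem_insert_self b S))


/-- Core decomposition step: if `F` is a nontrivial filter supported in `Ak (n+1) \ {c}`
converging to `c`, then either `c ∈ Ak n`, or we can peel off a nonzero isolated letter. -/
theorem cluster_step {A : Set G} (hAc : IsCompact A)
    (hiso : ∀ x ∈ A, x ≠ 0 → ∃ U ∈ 𝓝 x, ∀ y ∈ A, y ∈ U → y = x)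
    (Ak : ℕ → Set G) (hAksucc : ∀ k, Ak (k + 1) = Ak k + A)
    (hAkc : ∀ n, IsCompact (Ak n))
    (n : ℕ) (c : G) (F : Filter G) (hFne : F.NeBot)
    (hFp : F ≤ 𝓟 (Ak (n + 1) \ {c})) (hFc : F ≤ 𝓝 c) :
    c ∈ Ak n ∨ ∃ z₀, z₀ ∈ A ∧ z₀ ≠ 0 ∧ ∃ F'' : Filter G, F''.NeBot ∧
      F'' ≤ 𝓟 (Ak n \ {c - z₀}) ∧ F'' ≤ 𝓝 (c - z₀) := by
  classical
  have hdec : ∀ x, x ∈ Ak (n + 1) → ∃ y z, y ∈ Ak n ∧ z ∈ A ∧ y + z = x := by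
    intro x hx
    rw [hAksucc] at hx
    rcases Set.mem_add.mp hx with ⟨y, hy, z, hz, hyz⟩
    exact ⟨y, z, hy, hz, hyz⟩
  choose! Y Z hY hZ hYZ using hdec
  have hmem : ∀ᶠ x in F, x ∈ Ak (n + 1) ∧ x ≠ c := by
    have := le_principal_iff.mp hFp
    filter_upwards [this] with x hx
    exact ⟨hx.1, hx.2⟩
  set pairF := Filter.map (fun x => (Y x, Z x)) F with hpairF
  haveI : pairF.NeBot := Filter.map_neBot
  have hpair_le : pairF ≤ 𝓟 ((Ak n) ×ˢ A) := by
    rw [le_principal_iff, hpairF, Filter.mem_map]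
    filter_upwards [hmem] with x hx
    exact ⟨hY x hx.1, hZ x hx.1⟩
  obtain ⟨⟨y₀, z₀⟩, hyz₀K, hcl⟩ := ((hAkc n).prod hAc) hpair_le
  have hy₀ : y₀ ∈ Ak n := hyz₀K.1
  have hz₀ : z₀ ∈ A := hyz₀K.2
  -- y₀ + z₀ = c
  have hclsum : ClusterPt (y₀ + z₀) F := by
    have h1 : ClusterPt (y₀ + z₀) (Filter.map (fun p : G × G => p.1 + p.2) pairF) :=
      hcl.map (continuous_add.continuousAt) tendsto_map
    have h2 : Filter.map (fun p : G × G => p.1 + p.2) pairF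
        = Filter.map (fun x => Y x + Z x) F := Filter.map_map
    have h3 : Filter.map (fun x => Y x + Z x) F = F := by
      have : (fun x => Y x + Z x) =ᶠ[F] id := by
        filter_upwards [hmem] with x hx
        exact hYZ x hx.1
      rw [Filter.map_congr this, Filter.map_id]
    rwa [h2, h3] at h1
  have heq : y₀ + z₀ = c := eq_of_nhds_neBot (hclsum.mono hFc)
  by_cases hz0 : z₀ = 0
  · left
    rw [hz0, add_zero] at heq
    rwa [← heq]
  · right
    refine ⟨z₀, hz₀, hz0, ?_⟩
    obtain ⟨U, hU, hUiso⟩ := hiso z₀ hz₀ hz0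
    have hclZ : ClusterPt z₀ (Filter.map Z F) := by
      have := hcl.map (continuous_snd.continuousAt) tendsto_map
      rwa [show Filter.map Prod.snd pairF = Filter.map Z F from Filter.map_map] at this
    have hfreq : ∃ᶠ x in F, Z x ∈ U := by
      rw [← Filter.frequently_map (P := fun y => y ∈ U)]
      apply Filter.frequently_iff.mpr
      intro V hV
      obtain ⟨y, hy⟩ := (clusterPt_iff_nonempty.mp hclZ hU hV)
      exact ⟨y, hy.2, hy.1⟩
    have hfreq' : ∃ᶠ x in F, Z x = z₀ ∧ x ∈ Ak (n + 1) ∧ x ≠ c := by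
      apply (hfreq.and_eventually hmem).mono
      rintro x ⟨hxU, hx1, hx2⟩
      exact ⟨hUiso _ (hZ x hx1) hxU, hx1, hx2⟩
    set F' := F ⊓ 𝓟 {x | Z x = z₀ ∧ x ∈ Ak (n + 1) ∧ x ≠ c} with hF'
    haveI hF'ne : F'.NeBot := Filter.frequently_iff_neBot.mp hfreq'
    refine ⟨Filter.map (fun x => x - z₀) F', Filter.map_neBot, ?_, ?_⟩
    · rw [le_principal_iff, Filter.mem_map]
      have : {x | Z x = z₀ ∧ x ∈ Ak (n + 1) ∧ x ≠ c} ∈ F' :=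
        mem_inf_of_right (Filter.mem_principal_self _)
      filter_upwards [this] with x hx
      rcases hx with ⟨hZx, hxA, hxc⟩
      constructor
      · show x - z₀ ∈ Ak n
        have : Y x = x - z₀ := by
          rw [← hZx]; rw [eq_sub_iff_add_eq]; exact hYZ x hxA
        rw [← this]; exact hY x hxA
      · show (fun x => x - z₀) x ∉ ({c - z₀} : Set G)
        simp only [Set.mem_singleton_iff, sub_left_inj]
        exact hxc
    · have : Tendsto (fun x => x - z₀) F' (𝓝 (c - z₀)) := by
        have h1 : Tendsto id F' (𝓝 c) := (inf_le_left.trans hFc : F' ≤ 𝓝 c)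
        exact h1.sub_const z₀
      exact this

theorem cluster_lemma {A : Set G} (hAc : IsCompact A)
    (hiso : ∀ x ∈ A, x ≠ 0 → ∃ U ∈ 𝓝 x, ∀ y ∈ A, y ∈ U → y = x)
    (Ak : ℕ → Set G) (hAk0 : Ak 0 = {0}) (hAksucc : ∀ k, Ak (k + 1) = Ak k + A)
    (hAkc : ∀ n, IsCompact (Ak n)) :
    ∀ (n : ℕ) (c : G) (F : Filter G), F.NeBot → F ≤ 𝓟 (Ak (n + 1) \ {c}) →
      F ≤ 𝓝 c → c ∈ Ak n := by
  intro n
  induction n with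
  | zero =>
    intro c F hFne hFp hFc
    rcases cluster_step hAc hiso Ak hAksucc hAkc 0 c F hFne hFp hFc with h | ⟨z₀, hz₀, hz0, F'', hne, hp, hc⟩
    · exact h
    · exfalso
      rw [hAk0] at hp
      by_cases hcz : c - z₀ = 0
      · rw [hcz] at hp
        simp only [Set.diff_self] at hp
        rw [Filter.principal_empty, le_bot_iff] at hp
        exact hne.ne hp
      · have h1 : ClusterPt (c - z₀) (𝓟 ({0} \ {c - z₀} : Set G)) :=
          (hne.mono (le_inf hc hp))
        have h2 : c - z₀ ∈ closure ({0} \ {c - z₀} : Set G) :=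
          mem_closure_iff_clusterPt.mpr h1
        have h3 : closure ({0} \ {c - z₀} : Set G) ⊆ {0} :=
          closure_minimal Set.diff_subset isClosed_singleton
        exact hcz (h3 h2)
  | succ m IH =>
    intro c F hFne hFp hFc
    rcases cluster_step hAc hiso Ak hAksucc hAkc (m + 1) c F hFne hFp hFc with h | ⟨z₀, hz₀, hz0, F'', hne, hp, hc⟩
    · exact h
    · have : c - z₀ ∈ Ak m := IH (c - z₀) F'' hne hp hc
      rw [hAksucc]
      have := Set.add_mem_add this hz₀
      rwa [sub_add_cancel] at this



theorem key_lemma (a : ℕ → G) (ha : Tendsto a atTop (𝓝 0)) (hinj : Function.Injective a)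
    (hne : ∀ n, a n ≠ 0) {A : Set G} (hA : A = {0} ∪ Set.range a ∪ (-(Set.range a)))
    (Ak : ℕ → Set G) (hAk0 : Ak 0 = {0}) (hAksucc : ∀ k, Ak (k + 1) = Ak k + A)
    (I : Finset ℕ) (hI : GoodSet a Ak I) (N : ℕ) (hIN : ∀ i ∈ I, i < N) :
    ∃ μ, N ≤ μ ∧ GoodSet a Ak (insert μ I) := by
  classical
  have hAc : IsCompact A := compactA a ha hA
  have hAkc : ∀ n, IsCompact (Ak n) := compactAk hAc Ak hAk0 hAksucc
  have hiso := isolatedA a ha hA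
  by_contra hcon
  push_neg at hcon
  -- normalize the failure data
  have hbad : ∀ μ, N ≤ μ → ∃ (S₀ T₀ : Finset ℕ) (σ : Bool) (n : ℕ),
      S₀ ⊆ I ∧ T₀ ⊆ I ∧ n ≤ S₀.card ∧
      (cond σ (a μ) (-a μ)) + ∑ i ∈ S₀, (if i ∈ T₀ then a i else -a i) ∈ Ak n := by
    intro μ hμ
    have hng := hcon μ hμ
    unfold GoodSet at hng
    push_neg at hng
    obtain ⟨S, hSsub, f, hf, n, hn, hsum⟩ := hng
    have hμI : μ ∉ I := fun h => absurd (hIN μ h) (not_lt.2 hμ)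
    have hμS : μ ∈ S := by
      by_contra hμS
      have hSI : S ⊆ I := fun i hi =>
        Finset.mem_of_mem_insert_of_ne (hSsub hi) (fun h => hμS (h ▸ hi))
      exact hI S hSI f hf n hn hsum
    set S₀ := S.erase μ with hS₀
    have hS₀I : S₀ ⊆ I := fun i hi => by
      have h1 := Finset.mem_of_mem_erase hi
      have h2 := Finset.ne_of_mem_erase hi
      exact Finset.mem_of_mem_insert_of_ne (hSsub h1) h2
    set T₀ := S₀.filter (fun i => f i = a i) with hT₀
    have hcard : S₀.card + 1 = S.card := Finset.card_erase_add_one hμS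
    have hsum2 : ∑ i ∈ S, f i
        = f μ + ∑ i ∈ S₀, (if i ∈ T₀ then a i else -a i) := by
      rw [← Finset.add_sum_erase S f hμS]
      congr 1
      apply Finset.sum_congr rfl
      intro i hi
      split_ifs with h
      · rw [hT₀, Finset.mem_filter] at h
        exact h.2
      · rcases hf i (Finset.mem_of_mem_erase hi) with h' | h'
        · exact absurd (by rw [hT₀, Finset.mem_filter]; exact ⟨hi, h'⟩) h
        · exact h'
    rcases hf μ hμS with hfμ | hfμ
    · refine ⟨S₀, T₀, true, n, hS₀I, (hT₀ ▸ (Finset.filter_subset _ _).trans hS₀I), by omega, ?_⟩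
      rw [show cond true (a μ) (-a μ) = a μ from rfl, ← hfμ, ← hsum2]
      exact hsum
    · refine ⟨S₀, T₀, false, n, hS₀I, (hT₀ ▸ (Finset.filter_subset _ _).trans hS₀I), by omega, ?_⟩
      rw [show cond false (a μ) (-a μ) = -a μ from rfl, ← hfμ, ← hsum2]
      exact hsum
  choose! S₀f T₀f σf nf hprop using hbad
  -- pigeonhole into a finite type
  let β := (↥(I.powerset) × ↥(I.powerset)) × (Bool × Fin (I.card + 1))
  have hjunk : β := ⟨⟨⟨∅, Finset.mem_powerset.mpr (Finset.empty_subset I)⟩,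
      ⟨∅, Finset.mem_powerset.mpr (Finset.empty_subset I)⟩⟩, ⟨true, ⟨0, Nat.succ_pos _⟩⟩⟩
  set D : ℕ → β := fun μ =>
    if h : N ≤ μ then
      ⟨⟨⟨S₀f μ, Finset.mem_powerset.mpr (hprop μ h).1⟩,
        ⟨T₀f μ, Finset.mem_powerset.mpr (hprop μ h).2.1⟩⟩,
       ⟨σf μ, ⟨nf μ, by
          have h1 := (hprop μ h).2.2.1
          have h2 := Finset.card_le_card (hprop μ h).1
          omega⟩⟩⟩
    else hjunk
    with hD
  obtain ⟨d, hd⟩ := Finite.exists_infinite_fiber D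
  set M : Set ℕ := (D ⁻¹' {d}) \ {μ | μ < N} with hM
  have hMinf : M.Infinite := (Set.infinite_coe_iff.mp hd).diff (Set.finite_lt_nat N)
  obtain ⟨⟨⟨S₀, hS₀pow⟩, ⟨T₀, hT₀pow⟩⟩, ⟨σ, nfin⟩⟩ := d
  set n := (nfin : ℕ) with hn
  set c : G := ∑ i ∈ S₀, (if i ∈ T₀ then a i else -a i) with hc
  have hMdata : ∀ μ ∈ M, N ≤ μ ∧ S₀f μ = S₀ ∧ T₀f μ = T₀ ∧ σf μ = σ ∧ nf μ = n := by
    intro μ hμ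
    obtain ⟨hμd, hμN⟩ := hμ
    have hNμ : N ≤ μ := not_lt.mp hμN
    have hDμ : D μ = ((⟨S₀, hS₀pow⟩, ⟨T₀, hT₀pow⟩), σ, nfin) := hμd
    rw [hD] at hDμ
    simp only [dif_pos hNμ] at hDμ
    refine ⟨hNμ, congrArg (fun q : β => (q.1.1 : Finset ℕ)) hDμ,
      congrArg (fun q : β => (q.1.2 : Finset ℕ)) hDμ,
      congrArg (fun q : β => q.2.1) hDμ,
      congrArg (fun q : β => (q.2.2 : ℕ)) hDμ⟩
  have hMsum : ∀ μ ∈ M, (cond σ (a μ) (-a μ)) + c ∈ Ak n := by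
    intro μ hμ
    obtain ⟨hNμ, e1, e2, e3, e4⟩ := hMdata μ hμ
    have := (hprop μ hNμ).2.2.2
    rwa [e1, e2, e3, e4] at this
  have hMn : ∃ μ₀ ∈ M, n ≤ S₀.card ∧ S₀ ⊆ I := by
    obtain ⟨μ₀, hμ₀⟩ := hMinf.nonempty
    obtain ⟨hNμ, e1, e2, e3, e4⟩ := hMdata μ₀ hμ₀
    refine ⟨μ₀, hμ₀, ?_, ?_⟩
    · have := (hprop μ₀ hNμ).2.2.1; rw [e1, e4] at this; exact this
    · have := (hprop μ₀ hNμ).1; rwa [e1] at this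
  obtain ⟨μ₀, hμ₀M, hnS₀, hS₀I⟩ := hMn
  -- the sign function on S₀
  have hgor : ∀ i ∈ S₀, (if i ∈ T₀ then a i else -a i) = a i ∨ (if i ∈ T₀ then a i else -a i) = -a i := by
    intro i _
    by_cases h : i ∈ T₀
    · exact Or.inl (if_pos h)
    · exact Or.inr (if_neg h)
  rcases Nat.eq_zero_or_pos n with hn0 | hnpos
  · -- n = 0 : infinitely many μ with a μ a fixed value
    have hval : ∀ μ ∈ M, a μ = cond σ (-c) c := by
      intro μ hμ
      have h1 := hMsum μ hμ
      rw [hn0, hAk0, Set.mem_singleton_iff] at h1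
      have h2 : cond σ (a μ) (-a μ) = -c := eq_neg_of_add_eq_zero_left h1
      cases σ
      · simp only [Bool.cond_false] at h2 ⊢
        rw [← neg_neg (a μ), h2, neg_neg]
      · simpa using h2
    obtain ⟨μ₁, hμ₁, μ₂, hμ₂, hne12⟩ := hMinf.nontrivial
    exact hne12 (hinj ((hval μ₁ hμ₁).trans (hval μ₂ hμ₂).symm))
  · -- n ≥ 1 : cluster argument
    set L : Filter ℕ := atTop ⊓ 𝓟 M with hL
    haveI hLne : L.NeBot := by
      have hfr : ∃ᶠ μ in atTop, μ ∈ M := by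
        rw [Filter.frequently_atTop]
        intro b
        obtain ⟨μ, hμM, hμb⟩ := hMinf.exists_gt b
        exact ⟨μ, le_of_lt hμb, hμM⟩
      have h2 := Filter.frequently_iff_neBot.mp hfr
      rw [hL]
      rwa [Set.setOf_mem_eq] at h2
    set φ : ℕ → G := fun μ => (cond σ (a μ) (-a μ)) + c with hφ
    have hFc : Tendsto φ L (𝓝 c) := by
      have h1 : Tendsto a L (𝓝 0) := ha.mono_left inf_le_left
      have h2 : Tendsto (fun μ => cond σ (a μ) (-a μ)) L (𝓝 0) := by
        cases σ
        · simpa using h1.neg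
        · exact h1
      have := h2.add_const c
      rwa [zero_add] at this
    have hFp : Filter.map φ L ≤ 𝓟 (Ak n \ {c}) := by
      rw [le_principal_iff, Filter.mem_map]
      have hMev : ∀ᶠ μ in L, μ ∈ M :=
        (le_principal_iff.mp (inf_le_right : L ≤ 𝓟 M))
      filter_upwards [hMev] with μ hμ
      refine ⟨hMsum μ hμ, ?_⟩
      simp only [Set.mem_singleton_iff, hφ]
      intro hEq
      have : cond σ (a μ) (-a μ) = 0 := by
        have := add_right_cancel (a := cond σ (a μ) (-a μ)) (b := c) (c := 0)
        rw [zero_add] at this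
        exact this hEq
      cases σ
      · exact hne μ (neg_eq_zero.mp this)
      · exact hne μ this
    obtain ⟨k, hk⟩ := Nat.exists_eq_add_of_lt hnpos
    rw [hk, zero_add] at hFp
    have hck : c ∈ Ak k :=
      cluster_lemma hAc hiso Ak hAk0 hAksucc hAkc k c (Filter.map φ L)
        Filter.map_neBot hFp hFc
    exact hI S₀ hS₀I (fun i => if i ∈ T₀ then a i else -a i) hgor k (by omega) hck

end Aux

/-- From an injective null sequence of nonzero elements one can extract a
subsequence `b n = a (m n)` whose finite subset-sums give a copy of the Hamming space:
the map `F ↦ ∑ i ∈ F, b i` is injective, `∑_F b - ∑_H b ∈ Ak (|F ∆ H|)`, and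
`∑_F b - ∑_H b ∈ Ak n` implies `|F ∆ H| ≤ n`. -/
theorem exists_subsequence_hamming_copy {G : Type*} [AddCommGroup G]
    [TopologicalSpace G] [IsTopologicalAddGroup G] [T2Space G]
    (a : ℕ → G) (ha : Tendsto a atTop (𝓝 0)) (hinj : Function.Injective a)
    (hne : ∀ n, a n ≠ 0)
    (A : Set G) (hA : A = {0} ∪ Set.range a ∪ (-(Set.range a)))
    (Ak : ℕ → Set G) (hAk0 : Ak 0 = {0}) (hAksucc : ∀ k, Ak (k + 1) = Ak k + A) :
    ∃ m : ℕ → ℕ, StrictMono m ∧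
      (∀ F H : Finset ℕ, ∑ i ∈ F, a (m i) = ∑ i ∈ H, a (m i) → F = H) ∧
      (∀ F H : Finset ℕ, ∑ i ∈ F, a (m i) - ∑ i ∈ H, a (m i) ∈ Ak (symmDiff F H).card) ∧
      (∀ (F H : Finset ℕ) (n : ℕ),
        ∑ i ∈ F, a (m i) - ∑ i ∈ H, a (m i) ∈ Ak n → (symmDiff F H).card ≤ n) := by
  classical
  have good_empty : GoodSet a Ak ∅ := by
    intro S hS f hf n hn _
    rw [Finset.subset_empty] at hS
    subst hS
    simp at hn
  have key := fun I hI N hIN => key_lemma a ha hinj hne hA Ak hAk0 hAksucc I hI N hIN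
  set Q : ℕ × Finset ℕ → Prop := fun p => GoodSet a Ak p.2 ∧ (∀ i ∈ p.2, i ≤ p.1) ∧ p.1 ∈ p.2
    with hQ
  have step : ∀ p, Q p → ∃ q : ℕ × Finset ℕ, Q q ∧ p.1 < q.1 ∧ q.2 = insert q.1 p.2 := by
    rintro ⟨Mx, I⟩ hp
    obtain ⟨μ, hμN, hμG⟩ := key I hp.1 (Mx + 1) (fun i hi => Nat.lt_succ_of_le (hp.2.1 i hi))
    refine ⟨(μ, insert μ I), ⟨hμG, ?_, Finset.mem_insert_self μ I⟩, by simp; omega, rfl⟩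
    intro i hi
    rcases Finset.mem_insert.mp hi with rfl | hi
    · exact le_refl _
    · exact le_trans (hp.2.1 i hi) (by omega)
  have base : ∃ q : ℕ × Finset ℕ, Q q := by
    obtain ⟨μ, _, hμG⟩ := key ∅ good_empty 0 (by simp)
    exact ⟨(μ, insert μ ∅), hμG, by simp, Finset.mem_insert_self _ _⟩
  set St : ℕ → {p : ℕ × Finset ℕ // Q p} := fun t =>
    Nat.rec ⟨base.choose, base.choose_spec⟩
      (fun _ prev => ⟨(step prev.1 prev.2).choose, ((step prev.1 prev.2).choose_spec).1⟩) t
    with hStdef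
  have hStep : ∀ t, (St t).1.1 < (St (t+1)).1.1 ∧
      (St (t+1)).1.2 = insert ((St (t+1)).1.1) ((St t).1.2) := fun t =>
    ⟨((step (St t).1 (St t).2).choose_spec).2.1, ((step (St t).1 (St t).2).choose_spec).2.2⟩
  set m : ℕ → ℕ := fun t => (St t).1.1 with hmdef
  have hmono : StrictMono m := strictMono_nat_of_lt_succ (fun t => (hStep t).1)
  have hmm : ∀ t, m t ∈ (St t).1.2 := fun t => (St t).2.2.2
  have hsub : ∀ t, (St t).1.2 ⊆ (St (t+1)).1.2 := fun t => by
    rw [(hStep t).2]; exact Finset.subset_insert _ _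
  have hmem2 : ∀ i t, i ≤ t → m i ∈ (St t).1.2 := by
    intro i t
    induction t with
    | zero => intro h; rw [Nat.le_zero] at h; subst h; exact hmm 0
    | succ t ih =>
      intro h
      rcases Nat.lt_succ_iff_lt_or_eq.mp (Nat.lt_succ_of_le h) with h' | h'
      · exact hsub t (ih (Nat.lt_succ_iff.mp h'))
      · subst h'; exact hmm (t+1)
  have hgood : ∀ t, GoodSet a Ak (St t).1.2 := fun t => (St t).2.1
  -- core computation for a pair of finsets
  have core : ∀ F H : Finset ℕ,
      (∑ i ∈ F, a (m i) - ∑ i ∈ H, a (m i)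
        = ∑ k ∈ (symmDiff F H).image m,
            (if k ∈ (F \ H).image m then a k else -a k))
      ∧ ((symmDiff F H).image m).card = (symmDiff F H).card := by
    intro F H
    constructor
    · have h1 : ∑ i ∈ F, a (m i) = ∑ i ∈ F \ H, a (m i) + ∑ i ∈ F ∩ H, a (m i) := by
        rw [← Finset.sum_sdiff (Finset.inter_subset_left), Finset.sdiff_inter_self_left]
      have h2 : ∑ i ∈ H, a (m i) = ∑ i ∈ H \ F, a (m i) + ∑ i ∈ F ∩ H, a (m i) := by
        rw [← Finset.sum_sdiff (Finset.inter_subset_right), Finset.sdiff_inter_self_right]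
      have h3 : symmDiff F H = (F \ H) ∪ (H \ F) := by
        rw [symmDiff_def, Finset.sup_eq_union]
      have himg : ∑ k ∈ (symmDiff F H).image m,
          (if k ∈ (F \ H).image m then a k else -a k)
          = ∑ i ∈ symmDiff F H, (if m i ∈ (F \ H).image m then a (m i) else -a (m i)) :=
        Finset.sum_image (fun x _ y _ h => hmono.injective h)
      have h4 : ∑ i ∈ symmDiff F H, (if m i ∈ (F \ H).image m then a (m i) else -a (m i))
          = ∑ i ∈ F \ H, (if m i ∈ (F \ H).image m then a (m i) else -a (m i))
          + ∑ i ∈ H \ F, (if m i ∈ (F \ H).image m then a (m i) else -a (m i)) := by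
        rw [h3, Finset.sum_union disjoint_sdiff_sdiff]
      have h5 : ∀ i ∈ F \ H, (if m i ∈ (F \ H).image m then a (m i) else -a (m i)) = a (m i) :=
        fun i hi => if_pos (Finset.mem_image_of_mem m hi)
      have h6 : ∀ i ∈ H \ F, (if m i ∈ (F \ H).image m then a (m i) else -a (m i)) = -a (m i) := by
        intro i hi
        apply if_neg
        intro hmem
        obtain ⟨j, hj, hji⟩ := Finset.mem_image.mp hmem
        have hj' : j = i := hmono.injective hji
        subst hj'
        exact (Finset.mem_sdiff.mp hi).2 (Finset.mem_sdiff.mp hj).1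
      rw [himg, h4, Finset.sum_congr rfl h5, Finset.sum_congr rfl h6, h1, h2,
        Finset.sum_neg_distrib]
      abel
    · exact Finset.card_image_of_injOn (fun x _ y _ h => hmono.injective h)
  -- property (iii)
  have prop3 : ∀ (F H : Finset ℕ) (n : ℕ),
      ∑ i ∈ F, a (m i) - ∑ i ∈ H, a (m i) ∈ Ak n → (symmDiff F H).card ≤ n := by
    intro F H n hmemAk
    by_contra hlt
    push_neg at hlt
    obtain ⟨heq, hcard⟩ := core F H
    set T := (symmDiff F H).sup id with hT
    have himg_sub : (symmDiff F H).image m ⊆ (St T).1.2 := by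
      intro k hk
      obtain ⟨i, hi, rfl⟩ := Finset.mem_image.mp hk
      exact hmem2 i T (Finset.le_sup (f := id) hi)
    refine hgood T ((symmDiff F H).image m) himg_sub
      (fun k => if k ∈ (F \ H).image m then a k else -a k) ?_ n ?_ ?_
    · intro i _
      by_cases h : i ∈ (F \ H).image m
      · exact Or.inl (if_pos h)
      · exact Or.inr (if_neg h)
    · rw [hcard]; exact hlt
    · rw [← heq]; exact hmemAk
  -- property (ii)
  have prop2 : ∀ F H : Finset ℕ,
      ∑ i ∈ F, a (m i) - ∑ i ∈ H, a (m i) ∈ Ak (symmDiff F H).card := by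
    intro F H
    obtain ⟨heq, hcard⟩ := core F H
    rw [heq, ← hcard]
    apply sum_mem_Ak Ak hAk0 hAksucc
    intro k _
    by_cases h : k ∈ (F \ H).image m
    · rw [if_pos h, hA]
      exact Or.inl (Or.inr ⟨k, rfl⟩)
    · rw [if_neg h, hA]
      refine Or.inr ?_
      rw [Set.mem_neg, neg_neg]
      exact ⟨k, rfl⟩
  -- property (i)
  have prop1 : ∀ F H : Finset ℕ, ∑ i ∈ F, a (m i) = ∑ i ∈ H, a (m i) → F = H := by
    intro F H hFH
    have h0 : ∑ i ∈ F, a (m i) - ∑ i ∈ H, a (m i) ∈ Ak 0 := by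
      rw [hFH, sub_self, hAk0]; rfl
    have := prop3 F H 0 h0
    have hcard0 : (symmDiff F H).card = 0 := Nat.le_zero.mp this
    have hempty : symmDiff F H = ∅ := Finset.card_eq_zero.mp hcard0
    rwa [← Finset.bot_eq_empty, symmDiff_eq_bot] at hempty
  exact ⟨m, hmono, prop1, prop2, prop3⟩
end Aux
end

section
/- Let G be a Hausdorff topological abelian group and let (a_n)_{n∈ℕ} be an injective sequence of nonzero elements of G converging to 0 such that the set {a_n : n ∈ ℕ} generates G. Set A = {0} ∪ {a_n : n ∈ ℕ} ∪ {−a_n : n ∈ ℕ} and let A_k denote the k-fold sumset. Let f : G → {0,1} and m ∈ ℕ, and suppose that for every x ∈ G with x ∉ A_m, f is constant on the translate x + A. Then f is constant on G \ A_m. -/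
open Filter Topology Pointwise

/-- If the injective null sequence `a` of nonzero elements generates `G`,
`A = {0} ∪ {a n} ∪ {-a n}`, `Ak` the iterated sumsets, and `f : G → Bool` is constant on
every translate `x + A` with `x ∉ Ak m`, then `f` is constant on `G \ Ak m`. -/
theorem constant_outside_of_constant_on_translates {G : Type*} [AddCommGroup G]
    [TopologicalSpace G] [IsTopologicalAddGroup G] [T2Space G]
    (a : ℕ → G) (ha : Tendsto a atTop (𝓝 0)) (hinj : Function.Injective a)
    (hne : ∀ n, a n ≠ 0) (hgen : AddSubgroup.closure (Set.range a) = ⊤)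
    (A : Set G) (hA : A = {0} ∪ Set.range a ∪ (-(Set.range a)))
    (Ak : ℕ → Set G) (hAk0 : Ak 0 = {0}) (hAksucc : ∀ k, Ak (k + 1) = Ak k + A)
    (f : G → Bool) (m : ℕ)
    (hf : ∀ x : G, x ∉ Ak m → ∀ u ∈ A, ∀ v ∈ A, f (x + u) = f (x + v)) :
    ∀ y z : G, y ∉ Ak m → z ∉ Ak m → f y = f z := by
  classical
  -- Basic facts about A
  have h0A : (0:G) ∈ A := by rw [hA]; left; left; rfl
  have haA : ∀ n, a n ∈ A := fun n => by rw [hA]; left; right; exact ⟨n, rfl⟩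
  have hnegA : ∀ t ∈ A, -t ∈ A := by
    intro t ht
    rw [hA] at ht ⊢
    rcases ht with (h | h) | h
    · left; left; simp only [Set.mem_singleton_iff] at h ⊢; simp [h]
    · right; simpa using h
    · left; right; simpa using h
  -- Basic facts about Ak
  have hAmemsucc : ∀ k, ∀ x ∈ Ak k, ∀ t ∈ A, x + t ∈ Ak (k+1) := by
    intro k x hx t ht
    rw [hAksucc]
    exact Set.add_mem_add hx ht
  have hstep : ∀ k, Ak k ⊆ Ak (k+1) := by
    intro k x hx
    have := hAmemsucc k x hx 0 h0A
    simpa using this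
  have hAkmono : ∀ {k l : ℕ}, k ≤ l → Ak k ⊆ Ak l := by
    intro k l hkl
    obtain ⟨d, rfl⟩ := Nat.exists_eq_add_of_le hkl
    clear hkl
    induction d with
    | zero => exact subset_rfl
    | succ d ih => exact ih.trans (hstep (k + d))
  have hAkneg : ∀ k, ∀ x ∈ Ak k, -x ∈ Ak k := by
    intro k
    induction k with
    | zero => intro x hx; rw [hAk0] at hx ⊢; simp_all
    | succ k ih =>
      intro x hx
      rw [hAksucc] at hx
      obtain ⟨w, hw, t, ht, hwt⟩ := Set.mem_add.mp hx
      rw [← hwt, neg_add]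
      exact hAmemsucc k _ (ih _ hw) _ (hnegA _ ht)
  have hAkadd : ∀ i j, ∀ x ∈ Ak i, ∀ y ∈ Ak j, x + y ∈ Ak (i + j) := by
    intro i j
    induction j with
    | zero =>
      intro x hx y hy
      rw [hAk0] at hy
      simp only [Set.mem_singleton_iff] at hy
      subst hy
      simpa using hx
    | succ j ih =>
      intro x hx y hy
      rw [hAksucc] at hy
      obtain ⟨w, hw, t, ht, hwt⟩ := Set.mem_add.mp hy
      rw [← hwt, ← add_assoc x w t]
      exact hAmemsucc (i + j) _ (ih x hx w hw) t ht
  have hcover : ∀ x : G, ∃ k, x ∈ Ak k := by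
    let S : AddSubgroup G :=
      { carrier := {x | ∃ k, x ∈ Ak k}
        zero_mem' := ⟨0, by rw [hAk0]; rfl⟩
        add_mem' := by rintro p q ⟨i, hi⟩ ⟨j, hj⟩; exact ⟨i + j, hAkadd i j p hi q hj⟩
        neg_mem' := by rintro p ⟨i, hi⟩; exact ⟨i, hAkneg i p hi⟩ }
    intro x
    have h1 : AddSubgroup.closure (Set.range a) ≤ S := by
      apply (AddSubgroup.closure_le _).mpr
      rintro _ ⟨n, rfl⟩
      refine ⟨1, ?_⟩
      have := hAmemsucc 0 0 (by rw [hAk0]; rfl) (a n) (haA n)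
      simpa using this
    exact h1 (by rw [hgen]; trivial)
  -- Compactness facts
  have hAcpt : IsCompact A := by
    have h1 : IsCompact (insert (0:G) (Set.range a)) := ha.isCompact_insert_range
    have hneg0 : Tendsto (fun n => -(a n)) atTop (𝓝 0) := by
      have := ha.neg; simpa using this
    have h2 : IsCompact (insert (0:G) (Set.range fun n => -(a n))) :=
      hneg0.isCompact_insert_range
    have hAeq : A = insert (0:G) (Set.range a) ∪ insert 0 (Set.range fun n => -(a n)) := by
      rw [hA]
      ext x
      simp only [Set.mem_union, Set.mem_singleton_iff, Set.mem_insert_iff, Set.mem_range,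
        Set.mem_neg]
      constructor
      · rintro ((h | ⟨n, rfl⟩) | ⟨n, hn⟩)
        · exact Or.inl (Or.inl h)
        · exact Or.inl (Or.inr ⟨n, rfl⟩)
        · exact Or.inr (Or.inr ⟨n, by rw [hn]; simp⟩)
      · rintro ((h | ⟨n, rfl⟩) | (h | ⟨n, rfl⟩))
        · exact Or.inl (Or.inl h)
        · exact Or.inl (Or.inr ⟨n, rfl⟩)
        · exact Or.inl (Or.inl h)
        · exact Or.inr ⟨n, by simp⟩
    rw [hAeq]
    exact h1.union h2
  have hAkcpt : ∀ k, IsCompact (Ak k) := by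
    intro k
    induction k with
    | zero => rw [hAk0]; exact isCompact_singleton
    | succ k ih => rw [hAksucc]; exact ih.add hAcpt
  have hAkcl : ∀ k, IsClosed (Ak k) := fun k => (hAkcpt k).isClosed
  -- eventual goodness under perturbation
  have hev_good : ∀ x : G, x ∉ Ak m → ∀ᶠ n in atTop, x + a n ∉ Ak m := by
    intro x hx
    have hopen : IsOpen (Ak m)ᶜ := (hAkcl m).isOpen_compl
    have hten : Tendsto (fun n => x + a n) atTop (𝓝 x) := by
      have := (tendsto_const_nhds (x := x) (f := atTop)).add ha
      simpa using this
    exact hten.eventually (hopen.eventually_mem hx)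
  -- a n avoids any fixed value eventually
  have hev_ne : ∀ c : G, ∀ᶠ n in atTop, a n ≠ c := by
    intro c
    have hfin : (a ⁻¹' {c}).Finite :=
      Set.Finite.preimage (hinj.injOn) (Set.finite_singleton c)
    rw [← Nat.cofinite_eq_atTop]
    have := hfin.compl_mem_cofinite
    filter_upwards [this] with n hn
    simpa using hn
  -- isolation of nonzero points of A
  have hiso : ∀ t : G, t ∈ A → t ≠ 0 → ∀ (L : Filter ℕ) (s : ℕ → G),
      (∀ n, s n ∈ A) → Tendsto s L (𝓝 t) → ∀ᶠ n in L, s n = t := by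
    intro t htA ht0 L s hsA hconv
    obtain ⟨W, W0, hW, hW0, htW, h0W0, hdisj⟩ := t2_separation ht0
    have h1 : ∀ᶠ n in atTop, a n ∈ W0 := ha.eventually (hW0.eventually_mem h0W0)
    have h2 : ∀ᶠ n in atTop, -(a n) ∈ W0 := by
      have hneg0 : Tendsto (fun n => -(a n)) atTop (𝓝 0) := by
        have := ha.neg; simpa using this
      exact hneg0.eventually (hW0.eventually_mem h0W0)
    obtain ⟨M, hM⟩ := (h1.and h2).exists_forall_of_atTop
    set F : Set G := (a '' Set.Iio M) ∪ ((fun j => -(a j)) '' Set.Iio M) with hF_def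
    have hF : F.Finite := ((Set.finite_Iio M).image a).union ((Set.finite_Iio M).image _)
    have hW' : IsOpen (W \ (F \ {t})) :=
      hW.sdiff ((hF.subset Set.diff_subset).isClosed)
    have htW' : t ∈ W \ (F \ {t}) := ⟨htW, fun h => h.2 rfl⟩
    have hkey : ∀ x ∈ A, x ∈ W \ (F \ {t}) → x = t := by
      intro x hxA hxW'
      have hxnW0 : x ∉ W0 := fun hx => (Set.disjoint_left.mp hdisj hxW'.1) hx
      rw [hA] at hxA
      rcases hxA with (h | ⟨n, rfl⟩) | hxn
      · exact absurd (h ▸ h0W0) hxnW0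
      · by_cases hn : n < M
        · have hmem : a n ∈ F := Or.inl ⟨n, hn, rfl⟩
          by_contra hne'
          exact hxW'.2 ⟨hmem, hne'⟩
        · exact absurd ((hM n (le_of_not_gt hn)).1) hxnW0
      · rw [Set.mem_neg] at hxn
        obtain ⟨n, hn⟩ := hxn
        have hxeq : x = -(a n) := by rw [hn]; simp
        by_cases hnlt : n < M
        · have hmem : x ∈ F := Or.inr ⟨n, hnlt, hxeq.symm⟩
          by_contra hne'
          exact hxW'.2 ⟨hmem, hne'⟩
        · exact absurd (hxeq ▸ (hM n (le_of_not_gt hnlt)).2) hxnW0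
    have hevW' := hconv.eventually (hW'.eventually_mem htW')
    filter_upwards [hevW'] with n hn using hkey _ (hsA n) hn
  -- ultrafilter descent step
  have hstep_dec : ∀ (k : ℕ) (c : G) (U : Ultrafilter ℕ), (U : Filter ℕ) ≤ atTop →
      (∀ᶠ n in (U : Filter ℕ), c + a n ∈ Ak (k+1)) →
      c ∈ Ak k ∨ ∃ t ∈ A, t ≠ 0 ∧ ∀ᶠ n in (U : Filter ℕ), (c - t) + a n ∈ Ak k := by
    intro k c U hU hmem
    have hdec : ∀ n, ∃ t, t ∈ A ∧ (c + a n ∈ Ak (k+1) → c + a n - t ∈ Ak k) := by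
      intro n
      by_cases h : c + a n ∈ Ak (k+1)
      · rw [hAksucc] at h
        obtain ⟨w, hw, t, ht, hwt⟩ := Set.mem_add.mp h
        exact ⟨t, ht, fun _ => by rw [← hwt]; simpa using hw⟩
      · exact ⟨0, h0A, fun hh => absurd hh h⟩
    choose t htA htk using hdec
    have hUP : (U.map t : Filter G) ≤ 𝓟 A := by
      rw [le_principal_iff]
      exact Filter.mem_map.mpr (Filter.Eventually.of_forall (fun n => htA n) : _)
    obtain ⟨tl, htlA, hconv⟩ := hAcpt.ultrafilter_le_nhds (U.map t) hUP
    have hconv' : Tendsto t (U : Filter ℕ) (𝓝 tl) := hconv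
    have haU : Tendsto a (U : Filter ℕ) (𝓝 0) := ha.mono_left hU
    have hwt : Tendsto (fun n => c + a n - t n) (U : Filter ℕ) (𝓝 (c + 0 - tl)) :=
      (tendsto_const_nhds.add haU).sub hconv'
    have hcl : c + 0 - tl ∈ Ak k :=
      (hAkcl k).mem_of_tendsto hwt (hmem.mono fun n hn => htk n hn)
    rw [add_zero] at hcl
    by_cases h0 : tl = 0
    · left; rw [h0, sub_zero] at hcl; exact hcl
    · right
      refine ⟨tl, htlA, h0, ?_⟩
      have heq := hiso tl htlA h0 (U : Filter ℕ) t (fun n => htA n) hconv'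
      filter_upwards [heq, hmem] with n h1 h2
      have h3 := htk n h2
      rw [h1] at h3
      have h4 : c - tl + a n = c + a n - tl := by abel
      rw [h4]
      exact h3
  -- key: descent lemma
  have hKeyU : ∀ (k : ℕ) (c : G) (U : Ultrafilter ℕ), (U : Filter ℕ) ≤ atTop →
      (∀ᶠ n in (U : Filter ℕ), c + a n ∈ Ak (k+1)) → c ∈ Ak k := by
    intro k
    induction k with
    | zero =>
      intro c U hU hmem
      rcases hstep_dec 0 c U hU hmem with h | ⟨t, htA, ht0, hev⟩
      · exact h
      · exfalso
        have hev' : ∀ᶠ n in (U : Filter ℕ), a n = t - c := by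
          filter_upwards [hev] with n hn
          rw [hAk0, Set.mem_singleton_iff] at hn
          have : a n = -(c - t) := by
            rw [eq_neg_iff_add_eq_zero]
            rw [← hn]; abel
          rw [this]; abel
        have hne' : ∀ᶠ n in (U : Filter ℕ), a n ≠ t - c := (hev_ne (t - c)).filter_mono hU
        obtain ⟨n, h1, h2⟩ := (hev'.and hne').exists
        exact h2 h1
    | succ k ih =>
      intro c U hU hmem
      rcases hstep_dec (k+1) c U hU hmem with h | ⟨t, htA, ht0, hev⟩
      · exact h
      · have h1 := ih (c - t) U hU hev
        have h2 : (c - t) + t ∈ Ak (k+1+1) := by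
          exact hAkmono (by omega) (hAmemsucc k _ h1 t htA)
        simpa using hAmemsucc k _ h1 t htA
  -- eventual escape: if c ∉ Ak j then eventually c + a n ∉ Ak (j+1)
  have hClaimD : ∀ (j : ℕ) (c : G), c ∉ Ak j → ∀ᶠ n in atTop, c + a n ∉ Ak (j+1) := by
    intro j c hc
    by_contra hcon
    rw [Filter.not_eventually] at hcon
    have hfreq : ∃ᶠ n in atTop, c + a n ∈ Ak (j+1) := hcon.mono fun n hn => not_not.mp hn
    have hne' : (atTop ⊓ 𝓟 {n | c + a n ∈ Ak (j+1)}).NeBot := frequently_iff_neBot.mp hfreq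
    let U := Ultrafilter.of (atTop ⊓ 𝓟 {n | c + a n ∈ Ak (j+1)})
    have hU : (U : Filter ℕ) ≤ atTop := (Ultrafilter.of_le _).trans inf_le_left
    have hmem : ∀ᶠ n in (U : Filter ℕ), c + a n ∈ Ak (j+1) :=
      (Ultrafilter.of_le _) (mem_inf_of_right (Filter.mem_principal_self _))
    exact hc (hKeyU j c U hU hmem)
  -- c + a n eventually avoids Ak 0
  have hev0 : ∀ c : G, ∀ᶠ n in atTop, c + a n ∉ Ak 0 := by
    intro c
    filter_upwards [hev_ne (-c)] with n hn
    rw [hAk0, Set.mem_singleton_iff]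
    intro h
    apply hn
    have : a n = -c + (c + a n) := by abel
    rw [this, h, add_zero]
  -- the escape lemma
  have hescape : ∀ (r j : ℕ) (c y z : G), y ∉ Ak m → z ∉ Ak m →
      ((c ∉ Ak j ∧ m + 1 ≤ j + r) ∨ m + 2 ≤ r) →
      ∃ t : G, c + t ∉ Ak m ∧ y + t ∉ Ak m ∧ z + t ∉ Ak m ∧
        f y = f (y + t) ∧ f z = f (z + t) := by
    intro r
    induction r with
    | zero =>
      intro j c y z hy hz hcase
      rcases hcase with ⟨hc, hcount⟩ | h
      · have hcm : c ∉ Ak m := fun hmem => hc (hAkmono (by omega) hmem)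
        exact ⟨0, by simpa, by simpa, by simpa, by rw [add_zero], by rw [add_zero]⟩
      · omega
    | succ r ih =>
      intro j c y z hy hz hcase
      by_cases hcm : c ∈ Ak m
      · -- find the next step
        have hnext : ∃ (j' : ℕ) (n : ℕ), c + a n ∉ Ak j' ∧ m + 1 ≤ j' + r ∧
            y + a n ∉ Ak m ∧ z + a n ∉ Ak m := by
          rcases hcase with ⟨hc, hcount⟩ | hr
          · obtain ⟨n, h1, h2, h3⟩ :=
              ((hClaimD j c hc).and ((hev_good y hy).and (hev_good z hz))).exists
            exact ⟨j + 1, n, h1, by omega, h2, h3⟩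
          · by_cases hc0 : c ∈ Ak 0
            · obtain ⟨n, h1, h2, h3⟩ :=
                ((hev0 c).and ((hev_good y hy).and (hev_good z hz))).exists
              exact ⟨0, n, h1, by omega, h2, h3⟩
            · obtain ⟨n, h1, h2, h3⟩ :=
                ((hClaimD 0 c hc0).and ((hev_good y hy).and (hev_good z hz))).exists
              exact ⟨1, n, h1, by omega, h2, h3⟩
        obtain ⟨j', n, hn1, hn2, hn3, hn4⟩ := hnext
        obtain ⟨t', h1, h2, h3, h4, h5⟩ :=
          ih j' (c + a n) (y + a n) (z + a n) hn3 hn4 (Or.inl ⟨hn1, hn2⟩)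
        refine ⟨a n + t', ?_, ?_, ?_, ?_, ?_⟩
        · rwa [← add_assoc]
        · rwa [← add_assoc]
        · rwa [← add_assoc]
        · calc f y = f (y + a n) := by
                have h := hf y hy (a n) (haA n) 0 h0A
                rw [add_zero] at h
                exact h.symm
            _ = f (y + a n + t') := h4
            _ = f (y + (a n + t')) := by rw [add_assoc]
        · calc f z = f (z + a n) := by
                have h := hf z hz (a n) (haA n) 0 h0A
                rw [add_zero] at h
                exact h.symm
            _ = f (z + a n + t') := h5
            _ = f (z + (a n + t')) := by rw [add_assoc]
      · exact ⟨0, by simpa, by simpa, by simpa, by rw [add_zero], by rw [add_zero]⟩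
  -- the main induction
  have hmain : ∀ (N : ℕ) (y z : G), y ∉ Ak m → z ∉ Ak m → z - y ∈ Ak N → f y = f z := by
    intro N
    induction N with
    | zero =>
      intro y z hy hz hyz
      rw [hAk0, Set.mem_singleton_iff, sub_eq_zero] at hyz
      rw [hyz]
    | succ N ih =>
      intro y z hy hz hyz
      rw [hAksucc] at hyz
      obtain ⟨s, hs, u, hu, hsu⟩ := Set.mem_add.mp hyz
      have hz_eq : z = y + s + u := by
        have : y + (s + u) = z := by rw [hsu]; abel
        rw [← this]; abel
      by_cases hc : y + s ∈ Ak m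
      · obtain ⟨t, h1, h2, h3, h4, h5⟩ :=
          hescape (m + 2) 0 (y + s) y z hy hz (Or.inr le_rfl)
        have e1 : f (y + t) = f (y + s + t) := by
          apply ih (y + t) (y + s + t) h2 h1
          have : y + s + t - (y + t) = s := by abel
          rw [this]; exact hs
        have e2 : f (y + s + t) = f (z + t) := by
          have h := hf (y + s + t) h1 u hu 0 h0A
          rw [add_zero] at h
          have heq2 : y + s + t + u = z + t := by rw [hz_eq]; abel
          rw [heq2] at h
          exact h.symm
        calc f y = f (y + t) := h4
          _ = f (y + s + t) := e1
          _ = f (z + t) := e2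
          _ = f z := h5.symm
      · have e1 : f y = f (y + s) := by
          apply ih y (y + s) hy hc
          have : y + s - y = s := by abel
          rw [this]; exact hs
        have h := hf (y + s) hc u hu 0 h0A
        rw [add_zero] at h
        rw [← hz_eq] at h
        exact e1.trans h.symm
  intro y z hy hz
  obtain ⟨N, hN⟩ := hcover (z - y)
  exact hmain N y z hy hz hN
end

section
/- Let G be a countable, non-discrete, metrizable topological group. Then there exists a function f : G → ℝ which is unbounded on G but bounded on every compact subset of G. -/
open Filter Topology

/-- A countable non-discrete metrizable topological group carries a function
`f : G → ℝ` which is unbounded on `G` but bounded on every compact subset. -/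
theorem exists_unbounded_function_bounded_on_compacts {G : Type*} [Group G]
    [TopologicalSpace G] [IsTopologicalGroup G] [Countable G]
    [TopologicalSpace.MetrizableSpace G] (hnd : ¬ DiscreteTopology G) :
    ∃ f : G → ℝ, ¬ Bornology.IsBounded (Set.range f) ∧
      ∀ K : Set G, IsCompact K → Bornology.IsBounded (f '' K) := by
  letI : MetricSpace G := TopologicalSpace.metrizableSpaceMetric G
  set X := UniformSpace.Completion G with hX
  have hiso : Isometry ((↑) : G → X) := UniformSpace.Completion.coe_isometry
  have hdense : DenseRange ((↑) : G → X) := UniformSpace.Completion.denseRange_coe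
  have hcont : Continuous ((↑) : G → X) := UniformSpace.Completion.continuous_coe G
  have hp : ∃ p : X, p ∉ Set.range ((↑) : G → X) := by
    by_contra h
    push_neg at h
    have hsurj : Function.Surjective ((↑) : G → X) := fun x => h x
    have : Countable X := Countable.of_equiv _ (Equiv.ofBijective _ ⟨hiso.injective, hsurj⟩)
    haveI : Nonempty X := ⟨((1:G) : X)⟩
    obtain ⟨x, hx⟩ := nonempty_interior_of_iUnion_of_closed
      (f := fun x : X => ({x} : Set X)) (fun x => isClosed_singleton)
      (by simp [Set.iUnion_of_singleton])
    have hxopen : IsOpen ({x} : Set X) := by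
      have hsub : interior ({x} : Set X) ⊆ {x} := interior_subset
      have : interior ({x} : Set X) = {x} := by
        obtain ⟨y, hy⟩ := hx
        have := hsub hy
        simp only [Set.mem_singleton_iff] at this
        subst this
        exact Set.Subset.antisymm hsub (by
          intro z hz
          simp only [Set.mem_singleton_iff] at hz
          subst hz; exact hy)
      rw [← this]; exact isOpen_interior
    obtain ⟨g, rfl⟩ := hsurj x
    have hgopen : IsOpen ({g} : Set G) := by
      have : ({g} : Set G) = ((↑) : G → X) ⁻¹' {(g : X)} := by
        ext z
        simp [hiso.injective.eq_iff]
      rw [this]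
      exact hxopen.preimage hcont
    have : DiscreteTopology G := by
      rw [discreteTopology_iff_isOpen_singleton]
      intro y
      have himg : (Homeomorph.mulRight (g⁻¹ * y)) '' ({g} : Set G) = {y} := by
        simp [Homeomorph.mulRight]
      rw [← himg]
      exact (Homeomorph.mulRight (g⁻¹ * y)).isOpenMap _ hgopen
    exact hnd this
  obtain ⟨p, hp⟩ := hp
  have hne : ∀ x : G, (x : X) ≠ p := fun x hx => hp ⟨x, hx⟩
  refine ⟨fun x => (dist (x : X) p)⁻¹, ?_, ?_⟩
  · intro hb
    obtain ⟨C, hC⟩ := isBounded_iff_forall_norm_le.mp hb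
    have hCpos : (0:ℝ) < |C| + 1 := by positivity
    have hmem : p ∈ closure (Set.range ((↑) : G → X)) := hdense p
    rw [Metric.mem_closure_iff] at hmem
    obtain ⟨b, ⟨x, rfl⟩, hdist⟩ := hmem (|C| + 1)⁻¹ (by positivity)
    have hd0 : 0 < dist (x : X) p := dist_pos.mpr (hne x)
    rw [dist_comm] at hdist
    have hgt : |C| + 1 < (dist (x : X) p)⁻¹ := by
      rw [← inv_inv (|C| + 1)]
      exact inv_strictAnti₀ hd0 hdist
    have hle : (dist (x : X) p)⁻¹ ≤ C := by
      have := hC _ ⟨x, rfl⟩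
      rwa [Real.norm_eq_abs, abs_of_nonneg (by positivity)] at this
    have : C ≤ |C| := le_abs_self C
    linarith
  · intro K hK
    have hfc : Continuous fun x : G => (dist (x : X) p)⁻¹ :=
      ((continuous_dist.comp (hcont.prodMk continuous_const)).inv₀
        (fun x => dist_ne_zero.mpr (hne x)))
    exact (hK.image hfc).isBounded
end

section
/- Let G be a metrizable topological abelian group that is totally bounded, i.e., for every neighborhood U of 0 there is a finite set F ⊆ G with G = F + U. Let f : G → ℝ be a function such that for every sequence (b_n)_{n∈ℕ} in G converging to 0 there exists a constant C ≥ 0 with |f(u + x) − f(v + x)| ≤ C for all x ∈ G and all u, v ∈ {0} ∪ {b_n : n ∈ ℕ}. Then f is bounded on G. -/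
open Filter Topology Pointwise

/-- On a totally bounded metrizable topological abelian group, every function
`f : G → ℝ` which is "macro-uniform with respect to null sequences" (for every sequence
`b n → 0` there is `C ≥ 0` with `|f (u + x) - f (v + x)| ≤ C` for all `x` and all
`u, v ∈ {0} ∪ {b n}`) is bounded. -/
theorem bounded_of_macro_uniform_on_totally_bounded {G : Type*} [AddCommGroup G]
    [TopologicalSpace G] [IsTopologicalAddGroup G] [TopologicalSpace.MetrizableSpace G]
    (htb : ∀ U ∈ 𝓝 (0 : G), ∃ F : Finset G, (F : Set G) + U = Set.univ)
    (f : G → ℝ)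
    (hf : ∀ b : ℕ → G, Tendsto b atTop (𝓝 0) → ∃ C : ℝ, 0 ≤ C ∧
      ∀ x : G, ∀ u ∈ ({0} ∪ Set.range b : Set G), ∀ v ∈ ({0} ∪ Set.range b : Set G),
        |f (u + x) - f (v + x)| ≤ C) :
    Bornology.IsBounded (Set.range f) := by
  -- Step 1: there is a neighborhood V of 0 and a constant C bounding |f (u+x) - f x|
  -- for all u ∈ V, x ∈ G.
  have key : ∃ V ∈ 𝓝 (0 : G), ∃ C : ℝ, ∀ u ∈ V, ∀ x : G, |f (u + x) - f x| ≤ C := by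
    by_contra h
    push_neg at h
    obtain ⟨U, hU⟩ := (𝓝 (0 : G)).exists_antitone_basis
    have hstep : ∀ n : ℕ, ∃ u ∈ U n, ∃ x : G, (n : ℝ) < |f (u + x) - f x| := by
      intro n
      obtain ⟨u, hu, x, hx⟩ := h (U n) (hU.mem n) n
      exact ⟨u, hu, x, hx⟩
    choose u hu x hx using hstep
    have hb : Tendsto u atTop (𝓝 (0 : G)) := hU.tendsto hu
    obtain ⟨C, hC0, hC⟩ := hf u hb
    obtain ⟨n, hn⟩ := exists_nat_gt C
    have h1 := hC (x n) (u n) (Or.inr ⟨n, rfl⟩) 0 (Or.inl rfl)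
    rw [zero_add] at h1
    linarith [hx n]
  obtain ⟨V, hV, C, hC⟩ := key
  obtain ⟨F, hF⟩ := htb V hV
  have hFne : F.Nonempty := by
    rcases Set.eq_univ_iff_forall.mp hF 0 with ⟨g, hg, v, hv, hgv⟩
    exact ⟨g, hg⟩
  set M : ℝ := F.sup' hFne fun g => |f g| with hM
  rw [isBounded_iff_forall_norm_le]
  refine ⟨C + M, ?_⟩
  rintro _ ⟨y, rfl⟩
  rcases Set.eq_univ_iff_forall.mp hF y with ⟨g, hg, v, hv, hgv⟩
  have h1 : |f (v + g) - f g| ≤ C := hC v hv g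
  have h2 : |f g| ≤ M := Finset.le_sup' (fun g => |f g|) hg
  have hy : f y = f (v + g) := by rw [← hgv, add_comm]
  rw [Real.norm_eq_abs, hy]
  calc |f (v + g)| ≤ |f (v + g) - f g| + |f g| := by
        simpa using abs_add_le (f (v + g) - f g) (f g)
    _ ≤ C + M := add_le_add h1 h2
end

section
/- Let G be a non-discrete metrizable topological group (written multiplicatively with identity 1) and let (A_n)_{n∈ℕ} be a sequence of subsets of G with A_n ⊆ A_{n+1} such that each A_n is countable and compact. Then there exists a sequence (b_n)_{n∈ℕ} in G converging to 1 such that for every m ∈ ℕ the set {b_n : n ∈ ℕ} is not contained in A_m. (Consequently, the sequential coarse structure of a non-discrete metrizable group has no linearly ordered base.) -/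
open Filter Topology

/-- In a non-discrete metrizable topological group, given an increasing sequence
`(A n)` of countable compact subsets, there is a sequence `b` converging to `1` whose range
is not contained in any `A m`. -/
theorem exists_null_sequence_escaping_chain {G : Type*} [Group G] [TopologicalSpace G]
    [IsTopologicalGroup G] [TopologicalSpace.MetrizableSpace G]
    (hnd : ¬ DiscreteTopology G)
    (A : ℕ → Set G) (hmono : ∀ n, A n ⊆ A (n + 1))
    (hcount : ∀ n, (A n).Countable) (hcomp : ∀ n, IsCompact (A n)) :
    ∃ b : ℕ → G, Tendsto b atTop (𝓝 (1 : G)) ∧ ∀ m : ℕ, ¬ Set.range b ⊆ A m := by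
  letI := TopologicalSpace.metrizableSpaceMetric G
  -- punctured neighborhoods are nontrivial at every point
  have hone : (𝓝[≠] (1 : G)).NeBot := by
    rw [neBot_iff]
    intro h
    exact hnd (discreteTopology_iff_isOpen_singleton_one.2
      ((isOpen_singleton_iff_punctured_nhds (1 : G)).2 h))
  haveI hperf : ∀ x : G, (𝓝[≠] x).NeBot := by
    intro x
    have := ((Homeomorph.mulLeft x).map_punctured_nhds_eq (1 : G))
    simp only [Homeomorph.coe_mulLeft, mul_one] at this
    rw [← this]
    exact hone.map _
  -- key: every neighborhood of 1 contains a point outside A m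
  have key : ∀ m : ℕ, ∀ U ∈ 𝓝 (1 : G), ∃ x ∈ U, x ∉ A m := by
    intro m U hU
    by_contra h
    push_neg at h
    have hUA : U ⊆ A m := fun x hx => h x hx
    -- G is locally compact
    haveI : LocallyCompactSpace G :=
      (hcomp m).locallyCompactSpace_of_mem_nhds_of_group (Filter.mem_of_superset hU hUA)
    -- A m is meagre
    have hmeagre : IsMeagre (A m) := by
      rw [isMeagre_iff_countable_union_isNowhereDense]
      refine ⟨(fun x => {x}) '' (A m), ?_, (hcount m).image _, ?_⟩
      · rintro t ⟨x, -, rfl⟩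
        show IsNowhereDense {x}
        unfold IsNowhereDense
        rw [closure_singleton, interior_singleton]
      · intro x hx
        exact Set.mem_sUnion.2 ⟨{x}, ⟨x, hx, rfl⟩, rfl⟩
    have hdense : Dense (A m)ᶜ := dense_of_mem_residual hmeagre
    obtain ⟨y, hy⟩ := hdense.inter_open_nonempty (interior U) isOpen_interior
      ⟨1, mem_interior_iff_mem_nhds.2 hU⟩
    exact hy.2 (hUA (interior_subset hy.1))
  -- choose antitone basis of 𝓝 1
  obtain ⟨s, hs⟩ := (𝓝 (1 : G)).exists_antitone_basis
  have hpick : ∀ m : ℕ, ∃ x ∈ s m, x ∉ A m := fun m =>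
    key m (s m) (hs.mem m)
  choose b hb1 hb2 using hpick
  refine ⟨b, hs.tendsto hb1, ?_⟩
  intro m hsub
  exact hb2 m (hsub (Set.mem_range_self m))
end
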